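/- Let S, Q ⊆ ℝ be periodic sequences and let ε ≥ 0. Suppose there is a bijection h : S → Q with |x − h(x)| ≤ ε for all x ∈ S, and suppose 2ε is strictly smaller than every distance between two distinct points of S and every distance between two distinct points of Q. Then Elm(S,Q) ≤ Elm^o(S,Q) ≤ 2ε. In particular, the elastic metrics satisfy Elm(S,Q) ≤ Elm^o(S,Q) ≤ 2·d_B(S,Q) whenever the minimum inter-point distance of S and Q exceeds 2·d_B(S,Q), where d_B is the bottleneck distance. -/

import Mathlib

/-- A periodic sequence in `ℝ` with an `m`-point motif `p` and period `l`:
the set `{p i + l * j : i ∈ Fin m, j ∈ ℤ}` where `0 ≤ p 0 < p 1 < ⋯ < p (m-1) < l`. -/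
structure PSeq (m : ℕ) where
  m_pos : 0 < m
  l : ℝ
  l_pos : 0 < l
  p : Fin m → ℝ
  p_strict : StrictMono p
  p0_nonneg : 0 ≤ p ⟨0, m_pos⟩
  p_lt : ∀ i, p i < l

namespace PSeq

variable {m : ℕ}

/-- The set of points of the periodic sequence. -/
def pts (S : PSeq m) : Set ℝ := {x | ∃ (i : Fin m) (j : ℤ), x = S.p i + S.l * j}

/-- The period is minimal: the same set of points cannot be produced with a smaller period. -/
def IsMinimal (S : PSeq m) : Prop := ∀ (m' : ℕ) (T : PSeq m'), T.pts = S.pts → S.l ≤ T.l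

/-- The distance list `D` of the periodic sequence, indexed by `ZMod m`:
`D i = p (i+1) - p i` for `i < m - 1`, and `D (m-1) = (p 0 + l) - p (m-1)`. -/
noncomputable def D (S : PSeq m) : ZMod m → ℝ := fun i =>
  letI : NeZero m := ⟨S.m_pos.ne'⟩
  if h : i.val + 1 < m then S.p ⟨i.val + 1, h⟩ - S.p ⟨i.val, i.val_lt⟩
  else S.p ⟨0, S.m_pos⟩ + S.l - S.p ⟨i.val, i.val_lt⟩

end PSeq

/-- The cyclic shift `σ_s` acting on vectors indexed by `ZMod n`: `(σ_s v) i = v (i + s)`. -/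
def shiftVec {n : ℕ} (s : ZMod n) (v : ZMod n → ℝ) : ZMod n → ℝ := fun i => v (i + s)

/-- The reversal `ρ`: `(ρ v) i = v (m - 1 - i)` (note `m - 1 = -1` in `ZMod m`). -/
def revVec {n : ℕ} (v : ZMod n → ℝ) : ZMod n → ℝ := fun i => v (-1 - i)

/-- The Minkowski sup-norm `‖v‖_∞ = max_i |v i|` of a vector indexed by `ZMod n`, `n > 0`. -/
noncomputable def supNorm {n : ℕ} (hn : 0 < n) (v : ZMod n → ℝ) : ℝ :=
  letI : NeZero n := ⟨hn.ne'⟩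
  Finset.univ.sup' (Finset.univ_nonempty_iff.mpr ⟨0⟩) fun i => |v i|

namespace PSeq

/-- The distance list of the multiple `(n / m) S` of a periodic sequence `S` with `m ∣ n`,
i.e. the `(n/m)`-fold concatenation of `D S`, indexed by `ZMod n`. -/
noncomputable def Dc {m : ℕ} (S : PSeq m) (n : ℕ) : ZMod n → ℝ :=
  fun i => S.D ((i.val : ZMod m))

/-- The oriented elastic metric `Elm^o(S,Q)`: with `n = lcm(m₁, m₂)`, the minimum over all
cyclic shifts `s ∈ ZMod n` of `‖D((n/m₁)S) - σ_s(D((n/m₂)Q))‖_∞`. -/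
noncomputable def Elmo {m₁ m₂ : ℕ} (S : PSeq m₁) (Q : PSeq m₂) : ℝ :=
  letI : NeZero (Nat.lcm m₁ m₂) := ⟨(Nat.lcm_pos S.m_pos Q.m_pos).ne'⟩
  Finset.univ.inf' (Finset.univ_nonempty_iff.mpr ⟨0⟩)
    fun s : ZMod (Nat.lcm m₁ m₂) =>
      supNorm (Nat.lcm_pos S.m_pos Q.m_pos)
        fun i => S.Dc (Nat.lcm m₁ m₂) i - shiftVec s (Q.Dc (Nat.lcm m₁ m₂)) i

/-- The unoriented elastic metric `Elm(S,Q)`: the minimum over all `2n` permutations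
`σ_s` and `σ_s ∘ ρ` of `‖D((n/m₁)S) - σ(D((n/m₂)Q))‖_∞`, where `n = lcm(m₁, m₂)`. -/
noncomputable def Elm {m₁ m₂ : ℕ} (S : PSeq m₁) (Q : PSeq m₂) : ℝ :=
  letI : NeZero (Nat.lcm m₁ m₂) := ⟨(Nat.lcm_pos S.m_pos Q.m_pos).ne'⟩
  min
    (Finset.univ.inf' (Finset.univ_nonempty_iff.mpr ⟨0⟩)
      fun s : ZMod (Nat.lcm m₁ m₂) =>
        supNorm (Nat.lcm_pos S.m_pos Q.m_pos)
          fun i => S.Dc (Nat.lcm m₁ m₂) i - shiftVec s (Q.Dc (Nat.lcm m₁ m₂)) i)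
    (Finset.univ.inf' (Finset.univ_nonempty_iff.mpr ⟨0⟩)
      fun s : ZMod (Nat.lcm m₁ m₂) =>
        supNorm (Nat.lcm_pos S.m_pos Q.m_pos)
          fun i => S.Dc (Nat.lcm m₁ m₂) i - shiftVec s (revVec (Q.Dc (Nat.lcm m₁ m₂))) i)

end PSeq

/-!
Enumerate the points of a periodic sequence increasingly by `ℤ`, so that consecutive points
differ by the entries of the distance list. Because `h` moves points by at most `ε` while points
of `S` are more than `2ε` apart, `h` preserves the order; being a bijection onto `Q`, it
therefore induces an order automorphism of `ℤ`, i.e. a translation by some `c`. Each gap of `S`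
then differs from the corresponding gap of `Q`, shifted by `c`, by at most `2ε`, and the shift
`c` witnesses `Elm^o(S,Q) ≤ 2ε`.
-/

theorem Int.eq_add_apply_zero_of_strictMono_of_surjective {φ : ℤ → ℤ} (hmono : StrictMono φ)
    (hsurj : Function.Surjective φ) (k : ℤ) : φ k = k + φ 0 := by
  have hsucc (k : ℤ) : φ (k + 1) = φ k + 1 := by
    simpa only [StrictMono.coe_orderIsoOfSurjective, Order.succ_eq_add_one] using
      (hmono.orderIsoOfSurjective φ hsurj).map_succ k
  have hperiodic : Function.Periodic (fun k => φ k - k) 1 := fun k => by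
    simp only [hsucc]; ring
  linarith [show φ k - k = φ 0 by simpa using hperiodic.int_mul_eq k]

theorem strictMonoOn_of_abs_sub_le {α : Type*} [Field α] [LinearOrder α] [IsStrictOrderedRing α]
    {A : Set α} {h : α → α} {ε : α}
    (hmove : ∀ x ∈ A, |x - h x| ≤ ε) (hsep : ∀ x ∈ A, ∀ y ∈ A, x ≠ y → 2 * ε < |x - y|) :
    StrictMonoOn h A := by
  intro x hx y hy hxy
  have hx' := abs_le.mp (hmove x hx)
  have hy' := abs_le.mp (hmove y hy)
  have hgap := hsep x hx y hy hxy.ne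
  rw [abs_sub_comm, abs_of_pos (sub_pos.mpr hxy)] at hgap
  linarith [hx'.1, hy'.2]

namespace PSeq

variable {m : ℕ}

/-- The points of `S` in increasing order, indexed so that `S.enum 0 = S.p 0`. -/
noncomputable def enum (S : PSeq m) (n : ℤ) : ℝ :=
  S.p ⟨(n % (m : ℤ)).toNat, by
    have hm : (0 : ℤ) < m := by exact_mod_cast S.m_pos
    have := Int.emod_nonneg n hm.ne'
    have := Int.emod_lt_of_pos n hm
    omega⟩ + S.l * ((n / (m : ℤ) : ℤ) : ℝ)

theorem enum_eq (S : PSeq m) {n : ℤ} {k : ℕ} (hk : k < m) {q : ℤ} (hn : n = k + q * m) :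
    S.enum n = S.p ⟨k, hk⟩ + S.l * q := by
  have hm : (0 : ℤ) < m := by exact_mod_cast S.m_pos
  have hk' : (k : ℤ) < m := by exact_mod_cast hk
  have hmod : n % m = k := by
    rw [hn, Int.add_mul_emod_self_right, Int.emod_eq_of_lt (by positivity) hk']
  have hdiv : n / m = q := by
    rw [hn, Int.add_mul_ediv_right _ _ hm.ne', Int.ediv_eq_zero_of_lt (by positivity) hk',
      zero_add]
  simp only [enum, hmod, hdiv, Int.toNat_natCast]

theorem enum_mem (S : PSeq m) (n : ℤ) : S.enum n ∈ S.pts := ⟨_, n / m, rfl⟩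

theorem exists_enum_eq {S : PSeq m} {x : ℝ} (hx : x ∈ S.pts) : ∃ n : ℤ, S.enum n = x := by
  obtain ⟨i, j, rfl⟩ := hx
  exact ⟨i + j * m, S.enum_eq i.isLt rfl⟩

theorem enum_add_one (S : PSeq m) (n : ℤ) : S.enum (n + 1) = S.enum n + S.D n := by
  have : NeZero m := ⟨S.m_pos.ne'⟩
  set i : ZMod m := (n : ZMod m)
  have hval : (i.val : ℤ) = n % m := ZMod.val_intCast n
  have hn : n = i.val + n / m * m := by
    have := Int.emod_add_mul_ediv n m
    rw [hval]; linarith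
  rw [S.enum_eq i.val_lt hn]
  unfold D
  split_ifs with hlast
  · rw [S.enum_eq hlast (q := n / m) (by push_cast; linarith)]
    ring
  · have hm : (i.val : ℤ) + 1 = m := by have := i.val_lt; omega
    rw [S.enum_eq S.m_pos (q := n / m + 1) (by push_cast; linarith)]
    push_cast; ring

theorem D_pos (S : PSeq m) (i : ZMod m) : 0 < S.D i := by
  have : NeZero m := ⟨S.m_pos.ne'⟩
  unfold D
  split_ifs with hlast
  · exact sub_pos.mpr (S.p_strict (Fin.mk_lt_mk.mpr (Nat.lt_succ_self _)))
  · linarith [S.p_lt ⟨i.val, i.val_lt⟩, S.p0_nonneg]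

theorem strictMono_enum (S : PSeq m) : StrictMono S.enum :=
  strictMono_int_of_lt_succ fun n => by
    rw [S.enum_add_one]
    exact lt_add_of_pos_right _ (S.D_pos n)

theorem Dc_intCast (S : PSeq m) {n : ℕ} [NeZero n] (hmn : m ∣ n) (k : ℤ) :
    S.Dc n k = S.D k := by
  rw [Dc, ZMod.natCast_val, ZMod.cast_intCast hmn]

theorem exists_abs_D_sub_D_add_le {m₁ m₂ : ℕ} (S : PSeq m₁) (Q : PSeq m₂) {ε : ℝ}
    {h : ℝ → ℝ} (hbij : Set.BijOn h S.pts Q.pts) (hmove : ∀ x ∈ S.pts, |x - h x| ≤ ε)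
    (hsep : ∀ x ∈ S.pts, ∀ y ∈ S.pts, x ≠ y → 2 * ε < |x - y|) :
    ∃ c : ℤ, ∀ k : ℤ, |S.D k - Q.D (k + c)| ≤ 2 * ε := by
  have hmono := strictMonoOn_of_abs_sub_le hmove hsep
  choose φ hφ using fun k => exists_enum_eq (hbij.mapsTo (S.enum_mem k))
  have hφmono : StrictMono φ := fun a b hab => by
    rw [← Q.strictMono_enum.lt_iff_lt, hφ, hφ]
    exact hmono (S.enum_mem a) (S.enum_mem b) (S.strictMono_enum hab)
  have hφsurj : Function.Surjective φ := fun j => by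
    obtain ⟨x, hx, hxj⟩ := hbij.surjOn (Q.enum_mem j)
    obtain ⟨k, rfl⟩ := exists_enum_eq hx
    exact ⟨k, Q.strictMono_enum.injective (by rw [hφ, hxj])⟩
  have hshift := Int.eq_add_apply_zero_of_strictMono_of_surjective hφmono hφsurj
  refine ⟨φ 0, fun k => ?_⟩
  have hS : S.D k = S.enum (k + 1) - S.enum k := by rw [S.enum_add_one]; ring
  have hQ : Q.D (k + φ 0) = h (S.enum (k + 1)) - h (S.enum k) := by
    rw [← hφ (k + 1), ← hφ k, hshift (k + 1), hshift k, add_right_comm, Q.enum_add_one]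
    push_cast; ring
  rw [hS, hQ, sub_sub_sub_comm]
  calc _ ≤ |S.enum (k + 1) - h (S.enum (k + 1))| + |S.enum k - h (S.enum k)| := abs_sub _ _
    _ ≤ ε + ε := add_le_add (hmove _ (S.enum_mem _)) (hmove _ (S.enum_mem _))
    _ = 2 * ε := by ring

theorem Elm_le_Elmo {m₁ m₂ : ℕ} (S : PSeq m₁) (Q : PSeq m₂) : Elm S Q ≤ Elmo S Q :=
  min_le_left _ _

theorem Elmo_le {m₁ m₂ : ℕ} (S : PSeq m₁) (Q : PSeq m₂) {δ : ℝ} (s : ZMod (Nat.lcm m₁ m₂))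
    (hs : ∀ i, |S.Dc (Nat.lcm m₁ m₂) i - Q.Dc (Nat.lcm m₁ m₂) (i + s)| ≤ δ) :
    Elmo S Q ≤ δ := by
  have : NeZero (Nat.lcm m₁ m₂) := ⟨(Nat.lcm_pos S.m_pos Q.m_pos).ne'⟩
  exact (Finset.inf'_le _ (Finset.mem_univ s)).trans (Finset.sup'_le _ _ fun i _ => hs i)

end PSeq

theorem elastic_metrics_continuity_general {m₁ m₂ : ℕ} (S : PSeq m₁) (Q : PSeq m₂)
    (ε : ℝ)
    (h : ℝ → ℝ) (hbij : Set.BijOn h S.pts Q.pts)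
    (hmove : ∀ x ∈ S.pts, |x - h x| ≤ ε)
    (hsepS : ∀ x ∈ S.pts, ∀ y ∈ S.pts, x ≠ y → 2 * ε < |x - y|) :
    PSeq.Elm S Q ≤ PSeq.Elmo S Q ∧ PSeq.Elmo S Q ≤ 2 * ε := by
  refine ⟨S.Elm_le_Elmo Q, ?_⟩
  have : NeZero (Nat.lcm m₁ m₂) := ⟨(Nat.lcm_pos S.m_pos Q.m_pos).ne'⟩
  obtain ⟨c, hc⟩ := S.exists_abs_D_sub_D_add_le Q hbij hmove hsepS
  refine S.Elmo_le Q c fun i => ?_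
  obtain ⟨k, rfl⟩ := ZMod.intCast_surjective i
  rw [← Int.cast_add, S.Dc_intCast (Nat.dvd_lcm_left _ _), Q.Dc_intCast (Nat.dvd_lcm_right _ _),
    Int.cast_add]
  exact hc k

/-- continuity of the elastic metrics: if some bijection `h` between the
points of `S` and of `Q` moves every point by at most `ε`, and `2ε` is smaller than every
distance between distinct points of `S` and of `Q`, then `Elm(S,Q) ≤ Elm^o(S,Q) ≤ 2ε`.
In particular `Elm(S,Q) ≤ Elm^o(S,Q) ≤ 2 d_B(S,Q)` under the corresponding assumption
on the bottleneck distance `d_B`. -/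
theorem elastic_metrics_continuity {m₁ m₂ : ℕ} (S : PSeq m₁) (Q : PSeq m₂)
    (ε : ℝ) (hε : 0 ≤ ε)
    (h : ℝ → ℝ) (hbij : Set.BijOn h S.pts Q.pts)
    (hmove : ∀ x ∈ S.pts, |x - h x| ≤ ε)
    (hsepS : ∀ x ∈ S.pts, ∀ y ∈ S.pts, x ≠ y → 2 * ε < |x - y|)
    (hsepQ : ∀ x ∈ Q.pts, ∀ y ∈ Q.pts, x ≠ y → 2 * ε < |x - y|) :
    PSeq.Elm S Q ≤ PSeq.Elmo S Q ∧ PSeq.Elmo S Q ≤ 2 * ε :=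
  elastic_metrics_continuity_general S Q ε h hbij hmove hsepS
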